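/- The logic InqBT+[x] is not satisfiability-compact: there is a set Γ ∪ {ψ} of sentences such that every finite subset is satisfiable (supported by some model and nonempty team) but the whole set is not, where Γ = {φₙ | n ∈ ℕ} with φₙ a classical sentence asserting the existence of at least n distinct objects, and ψ the InqBT+[x] sentence defining finiteness. -/

import Mathlib

/-- A first-order signature. -/
structure Sig where
  Func : Type
  farity : Func → ℕ
  Rel : Type
  rarity : Rel → ℕ

/-- Terms over a signature; variables are natural numbers. -/
inductive Tm (σ : Sig) : Type where
  | var : ℕ → Tm σ
  | func : (f : σ.Func) → (Fin (σ.farity f) → Tm σ) → Tm σ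

/-- Formulas of InqBT+[x]: atoms, ⊥, ∧, inquisitive disjunction ⩒ (`ivee`),
    →, ∀ (`all`), inquisitive existential ∃ⁱ (`iex`), and [x] (`box`). -/
inductive Fm (σ : Sig) : Type where
  | rel : (R : σ.Rel) → (Fin (σ.rarity R) → Tm σ) → Fm σ
  | eq : Tm σ → Tm σ → Fm σ
  | bot : Fm σ
  | and : Fm σ → Fm σ → Fm σ
  | ivee : Fm σ → Fm σ → Fm σ
  | imp : Fm σ → Fm σ → Fm σ
  | all : ℕ → Fm σ → Fm σ
  | iex : ℕ → Fm σ → Fm σ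
  | box : ℕ → Fm σ → Fm σ

/-- A first-order model. -/
structure Model (σ : Sig) where
  D : Type
  nonempty : Nonempty D
  interpFunc : (f : σ.Func) → (Fin (σ.farity f) → D) → D
  interpRel : (R : σ.Rel) → (Fin (σ.rarity R) → D) → Prop

variable {σ : Sig}

/-- Value of a term under an assignment. -/
def Tm.val (M : Model σ) (g : ℕ → M.D) : Tm σ → M.D
  | .var n => g n
  | .func f ts => M.interpFunc f (fun i => (ts i).val M g)

/-- Free variables of a term. -/
def Tm.fv : Tm σ → Finset ℕ
  | .var n => {n}
  | .func _ ts => Finset.univ.biUnion (fun i => (ts i).fv)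

/-- Free variables of a formula. -/
def Fm.fv : Fm σ → Finset ℕ
  | .rel _ ts => Finset.univ.biUnion (fun i => (ts i).fv)
  | .eq t₁ t₂ => t₁.fv ∪ t₂.fv
  | .bot => ∅
  | .and φ ψ => φ.fv ∪ ψ.fv
  | .ivee φ ψ => φ.fv ∪ ψ.fv
  | .imp φ ψ => φ.fv ∪ ψ.fv
  | .all x φ => φ.fv.erase x
  | .iex x φ => φ.fv.erase x
  | .box x φ => φ.fv.erase x

/-- The team `X[x↦d]`, assigning the constant value `d` to `x` throughout `X`. -/
def cext (M : Model σ) (X : Set (ℕ → M.D)) (x : ℕ) (d : M.D) : Set (ℕ → M.D) :=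
  (fun g => Function.update g x d) '' X

/-- The team `X[x↦D]`, assigning all possible values to `x`. -/
def allext (M : Model σ) (X : Set (ℕ → M.D)) (x : ℕ) : Set (ℕ → M.D) :=
  ⋃ d : M.D, cext M X x d

/-- Team-semantic support relation `M ⊨_X φ` for InqBT+[x]. -/
def Support (M : Model σ) : Fm σ → Set (ℕ → M.D) → Prop
  | .rel R ts, X => ∀ g ∈ X, M.interpRel R (fun i => (ts i).val M g)
  | .eq t₁ t₂, X => ∀ g ∈ X, t₁.val M g = t₂.val M g
  | .bot, X => X = ∅
  | .and φ ψ, X => Support M φ X ∧ Support M ψ X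
  | .ivee φ ψ, X => Support M φ X ∨ Support M ψ X
  | .imp φ ψ, X => ∀ Y ⊆ X, Support M φ Y → Support M ψ Y
  | .all x φ, X => ∀ d : M.D, Support M φ (cext M X x d)
  | .iex x φ, X => ∃ d : M.D, Support M φ (cext M X x d)
  | .box x φ, X => Support M φ (allext M X x)

/-- `?φ := φ ⩒ ¬φ`, where `¬φ := φ → ⊥`. -/
def qmark {σ : Sig} (φ : Fm σ) : Fm σ := .ivee φ (.imp φ .bot)

/-- The value question `λt := ∀x ?(x = t)` (with `x` not occurring in `t`). -/
def lamT {σ : Sig} (x : ℕ) (t : Tm σ) : Fm σ := .all x (qmark (.eq (.var x) t))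

/-- The value question `λz` for a variable `z` (bound variable chosen fresh). -/
def lamVar {σ : Sig} (z : ℕ) : Fm σ := lamT (z + 1) (.var z)

/-- The dependence atom `=(x, y) := λx → λy`. -/
def depF {σ : Sig} (x y : ℕ) : Fm σ := .imp (lamVar x) (lamVar y)

/-- `s ≠ t := (s = t) → ⊥`. -/
def neqF {σ : Sig} (s t : Tm σ) : Fm σ := .imp (.eq s t) .bot

/-- The empty vocabulary. -/
def EmptySig : Sig := ⟨Empty, fun f => f.elim, Empty, fun r => r.elim⟩

/-- The relational encoding of a team over the variables `x = 0`, `y = 1`: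
    `Y[x,y] = {(g(x), g(y)) | g ∈ Y}`. -/
def teamRel (M : Model EmptySig) (Y : Set (ℕ → M.D)) : Set (M.D × M.D) :=
  (fun g => (g 0, g 1)) '' Y

/-- `φ(x,y) := ( =(x,y) ∧ =(y,x) ∧ ∃ⁱz (z ≠ y) → ∃ⁱu (u ≠ x) )`,
    with `x = 0`, `y = 1`, `z = 2`, `u = 3`. -/
def phiXY : Fm EmptySig :=
  .imp (.and (depF 0 1) (.and (depF 1 0) (.iex 2 (neqF (.var 2) (.var 1)))))
       (.iex 3 (neqF (.var 3) (.var 0)))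

/-- `¬φ := φ → ⊥`. -/
def fnot {σ : Sig} (φ : Fm σ) : Fm σ := .imp φ .bot

/-- Classical existential `∃x φ := ¬∀x¬φ`. -/
def fex {σ : Sig} (x : ℕ) (φ : Fm σ) : Fm σ := fnot (.all x (fnot φ))

/-- Finite conjunction of a list of formulas. -/
def bigAnd {σ : Sig} : List (Fm σ) → Fm σ
  | [] => .imp .bot .bot
  | φ :: rest => .and φ (bigAnd rest)

/-- Block of classical existentials. -/
def exList {σ : Sig} : List ℕ → Fm σ → Fm σ
  | [], φ => φ
  | x :: xs, φ => fex x (exList xs φ)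

/-- The classical sentence `φₙ := ∃x₁…∃xₙ ⋀_{i≠j} xᵢ ≠ xⱼ`, asserting the
    existence of at least `n` distinct objects. -/
def atLeast (n : ℕ) : Fm EmptySig :=
  exList (List.range n)
    (bigAnd (((List.range n).flatMap fun i => (List.range n).map fun j => (i, j)).filterMap
      fun p => if p.1 ≠ p.2 then some (neqF (.var p.1) (.var p.2)) else none))

/-- `Γ = {φₙ | n ∈ ℕ}`. -/
def GammaFin : Set (Fm EmptySig) := Set.range atLeast

/-- The sentence `ψ := [x][y]φ(x,y)` defining finiteness. -/
def psiFin : Fm EmptySig := .box 0 (.box 1 phiXY)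

section Aux

variable {σ : Sig}

/-- Classical (pointwise) truth, used for the flat fragment. -/
def Truth (M : Model σ) : (ℕ → M.D) → Fm σ → Prop
  | g, .rel R ts => M.interpRel R (fun i => (ts i).val M g)
  | g, .eq t₁ t₂ => t₁.val M g = t₂.val M g
  | _, .bot => False
  | g, .and φ ψ => Truth M g φ ∧ Truth M g ψ
  | g, .ivee φ ψ => Truth M g φ ∨ Truth M g ψ
  | g, .imp φ ψ => Truth M g φ → Truth M g ψ
  | g, .all x φ => ∀ d, Truth M (Function.update g x d) φ
  | g, .iex x φ => ∃ d, Truth M (Function.update g x d) φ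
  | _, .box _ _ => True

/-- The classical fragment. -/
inductive IsCl : Fm σ → Prop
  | rel (R ts) : IsCl (.rel R ts)
  | eq (t₁ t₂) : IsCl (.eq t₁ t₂)
  | bot : IsCl .bot
  | and {φ ψ} : IsCl φ → IsCl ψ → IsCl (.and φ ψ)
  | imp {φ ψ} : IsCl φ → IsCl ψ → IsCl (.imp φ ψ)
  | all (x) {φ} : IsCl φ → IsCl (.all x φ)

lemma mem_cext {M : Model σ} {X : Set (ℕ → M.D)} {x d h} :
    h ∈ cext M X x d ↔ ∃ g ∈ X, Function.update g x d = h := Set.mem_image _ _ _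

lemma flat {M : Model σ} {φ : Fm σ} (hc : IsCl φ) :
    ∀ X, Support M φ X ↔ ∀ g ∈ X, Truth M g φ := by
  induction hc with
  | rel R ts => intro X; simp [Support, Truth]
  | eq t₁ t₂ => intro X; simp [Support, Truth]
  | bot => intro X; simp [Support, Truth, Set.eq_empty_iff_forall_notMem]
  | and hφ hψ ihφ ihψ =>
      intro X
      simp only [Support, Truth, ihφ, ihψ]
      exact ⟨fun ⟨a, b⟩ g hg => ⟨a g hg, b g hg⟩,
        fun h => ⟨fun g hg => (h g hg).1, fun g hg => (h g hg).2⟩⟩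
  | imp hφ hψ ihφ ihψ =>
      intro X
      simp only [Support, Truth]
      constructor
      · intro h g hg tφ
        have := h {g} (by simpa using hg) ((ihφ {g}).2 (by simpa using tφ))
        simpa using (ihψ {g}).1 this g rfl
      · intro h Y hYX hφY
        exact (ihψ Y).2 fun g hg => h g (hYX hg) ((ihφ Y).1 hφY g hg)
  | all x hφ ih =>
      intro X
      simp only [Support, Truth]
      constructor
      · intro h g hg d
        exact (ih _).1 (h d) (Function.update g x d) ⟨g, hg, rfl⟩
      · intro h d
        refine (ih _).2 ?_
        rintro g' ⟨g, hg, rfl⟩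
        exact h g hg d

lemma isCl_neqF {s t : Tm σ} : IsCl (neqF s t) := .imp (.eq s t) .bot

lemma isCl_bigAnd : ∀ {l : List (Fm σ)}, (∀ φ ∈ l, IsCl φ) → IsCl (bigAnd l)
  | [], _ => .imp .bot .bot
  | φ :: rest, h =>
      .and (h φ (by simp)) (isCl_bigAnd fun ψ hψ => h ψ (by simp [hψ]))

lemma isCl_exList {φ : Fm σ} : ∀ (xs : List ℕ), IsCl φ → IsCl (exList xs φ)
  | [], h => h
  | x :: xs, h => .imp (.all x (.imp (isCl_exList xs h) .bot)) .bot

lemma truth_bigAnd {M : Model σ} {g} :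
    ∀ (l : List (Fm σ)), Truth M g (bigAnd l) ↔ ∀ φ ∈ l, Truth M g φ
  | [] => by simp [bigAnd, Truth]
  | φ :: rest => by
      simp [bigAnd, Truth, truth_bigAnd rest]

lemma truth_exList_of {M : Model σ} {φ : Fm σ} :
    ∀ (xs : List ℕ) (g h : ℕ → M.D), (∀ y, y ∉ xs → h y = g y) → Truth M h φ →
      Truth M g (exList xs φ)
  | [], g, h, hag, ht => by
      have : h = g := funext fun y => hag y (by simp)
      rwa [this] at ht
  | x :: xs, g, h, hag, ht => by
      simp only [exList, fex, fnot, Truth]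
      intro hall
      refine hall (h x) ?_
      refine truth_exList_of xs (Function.update g x (h x)) h ?_ ht
      intro y hy
      by_cases hyx : y = x
      · subst hyx; simp
      · rw [Function.update_of_ne hyx]
        exact hag y (by simp [hy, hyx])

lemma truth_exList_elim {M : Model σ} {φ : Fm σ} :
    ∀ (xs : List ℕ) (g : ℕ → M.D), Truth M g (exList xs φ) → ∃ h, Truth M h φ
  | [], g, h => ⟨g, h⟩
  | x :: xs, g, ht => by
      simp only [exList, fex, fnot, Truth] at ht
      by_contra hno
      exact ht fun d hd => hno (truth_exList_elim xs _ hd)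

lemma mem_atLeast_list {n : ℕ} {φ : Fm EmptySig} :
    φ ∈ (((List.range n).flatMap fun i => (List.range n).map fun j => (i, j)).filterMap
      fun p => if p.1 ≠ p.2 then some (neqF (.var p.1) (.var p.2)) else none) ↔
    ∃ i j, i < n ∧ j < n ∧ i ≠ j ∧ φ = neqF (.var i) (.var j) := by
  simp only [List.mem_filterMap, List.mem_flatMap, List.mem_map, List.mem_range]
  constructor
  · rintro ⟨⟨i, j⟩, ⟨⟨i', hi', j', hj', hp⟩, hif⟩⟩
    injection hp with h1 h2
    subst h1; subst h2
    by_cases hij : i' = j'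
    · simp [hij] at hif
    · simp [hij] at hif
      exact ⟨i', j', hi', hj', hij, hif.symm⟩
  · rintro ⟨i, j, hi, hj, hij, rfl⟩
    exact ⟨(i, j), ⟨i, hi, j, hj, rfl⟩, by simp [hij]⟩

end Aux

section Aux2

variable {σ : Sig}

lemma isCl_atLeast (n : ℕ) : IsCl (atLeast n) := by
  refine isCl_exList _ (isCl_bigAnd ?_)
  intro φ hφ
  obtain ⟨i, j, _, _, _, rfl⟩ := mem_atLeast_list.mp hφ
  exact isCl_neqF

lemma truth_atLeast {M : Model EmptySig} {n : ℕ} (h : ℕ → M.D)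
    (hinj : ∀ i j, i < n → j < n → i ≠ j → h i ≠ h j) :
    Truth M h (atLeast n) := by
  refine truth_exList_of _ h h (fun _ _ => rfl) ?_
  rw [truth_bigAnd]
  intro φ hφ
  obtain ⟨i, j, hi, hj, hij, rfl⟩ := mem_atLeast_list.mp hφ
  simp only [neqF, Truth, Tm.val]
  exact hinj i j hi hj hij

lemma inj_of_truth_atLeast {M : Model EmptySig} {n : ℕ} {g : ℕ → M.D}
    (t : Truth M g (atLeast n)) :
    ∃ h : ℕ → M.D, ∀ i j, i < n → j < n → i ≠ j → h i ≠ h j := by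
  obtain ⟨h, th⟩ := truth_exList_elim _ _ t
  refine ⟨h, fun i j hi hj hij => ?_⟩
  have := (truth_bigAnd _).mp th (neqF (.var i) (.var j))
    (mem_atLeast_list.mpr ⟨i, j, hi, hj, hij, rfl⟩)
  simpa only [neqF, Truth, Tm.val] using this

lemma support_neqF {M : Model σ} {s t : Tm σ} {X : Set (ℕ → M.D)} :
    Support M (neqF s t) X ↔ ∀ g ∈ X, s.val M g ≠ t.val M g := by
  rw [flat isCl_neqF]
  simp only [neqF, Truth]

lemma support_lamVar {M : Model σ} {z : ℕ} {X : Set (ℕ → M.D)} :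
    Support M (lamVar z) X ↔ ∀ g ∈ X, ∀ g' ∈ X, g z = g' z := by
  have hzz : (z : ℕ) ≠ z + 1 := by omega
  simp only [lamVar, lamT, qmark, Support]
  constructor
  · intro h g hg g' hg'
    rcases h (g z) with hall | hneg
    · have h2 := hall (Function.update g' (z+1) (g z)) ⟨g', hg', rfl⟩
      simp only [Tm.val, Function.update_self, Function.update_of_ne hzz] at h2
      exact h2
    · exfalso
      have h3 := hneg {Function.update g (z+1) (g z)}
        (by intro u hu; rcases hu with rfl; exact ⟨g, hg, rfl⟩) ?_
      · exact Set.singleton_ne_empty _ h3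
      · intro u hu
        rcases hu with rfl
        simp only [Tm.val, Function.update_self, Function.update_of_ne hzz]
  · intro h d
    by_cases hex : ∃ g ∈ X, g z = d
    · left
      rintro u ⟨g, hg, rfl⟩
      simp only [Tm.val, Function.update_self, Function.update_of_ne hzz]
      obtain ⟨g₀, hg₀, hg₀z⟩ := hex
      rw [← hg₀z]
      exact (h g hg g₀ hg₀).symm
    · right
      intro Y hY hYeq
      rw [Set.eq_empty_iff_forall_notMem]
      intro u hu
      obtain ⟨g, hg, rfl⟩ := hY hu
      have := hYeq _ hu
      simp only [Tm.val, Function.update_self, Function.update_of_ne hzz] at this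
      exact hex ⟨g, hg, this.symm⟩

end Aux2

section Aux3

variable {σ : Sig}

lemma support_depF {M : Model σ} {x y : ℕ} {X : Set (ℕ → M.D)} :
    Support M (depF x y) X ↔ ∀ g ∈ X, ∀ g' ∈ X, g x = g' x → g y = g' y := by
  have hdef : Support M (depF x y) X ↔
      (∀ Y ⊆ X, Support M (lamVar x) Y → Support M (lamVar y) Y) := Iff.rfl
  rw [hdef]
  constructor
  · intro h g hg g' hg' hgx
    have hsub : {g, g'} ⊆ X := by
      intro u hu; rcases hu with rfl | hu
      · exact hg
      · rcases hu with rfl; exact hg'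
    have hx : Support M (lamVar x) {g, g'} := by
      rw [support_lamVar]
      intro u hu u' hu'
      rcases hu with rfl | hu <;> rcases hu' with rfl | hu'
      · rfl
      · rcases hu' with rfl; exact hgx
      · rcases hu with rfl; exact hgx.symm
      · rcases hu with rfl; rcases hu' with rfl; rfl
    have hy := h {g, g'} hsub hx
    rw [support_lamVar] at hy
    exact hy g (by simp) g' (by simp)
  · intro h Y hY hx
    rw [support_lamVar] at hx
    rw [support_lamVar]
    intro g hg g' hg'
    exact h g (hY hg) g' (hY hg') (hx g hg g' hg')

open Classical in
noncomputable def shiftMap {D : Type} (f : ℕ ↪ D) (x : D) : D :=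
  if h : ∃ n, f n = x then f (h.choose + 1) else x

lemma shiftMap_inj {D : Type} (f : ℕ ↪ D) : Function.Injective (shiftMap f) := by
  intro a b hab
  unfold shiftMap at hab
  by_cases ha : ∃ n, f n = a <;> by_cases hb : ∃ n, f n = b
  · rw [dif_pos ha, dif_pos hb] at hab
    have h1 := f.injective hab
    have h2 : ha.choose = hb.choose := by omega
    rw [← ha.choose_spec, ← hb.choose_spec, h2]
  · rw [dif_pos ha, dif_neg hb] at hab
    exact absurd ⟨_, hab⟩ hb
  · rw [dif_neg ha, dif_pos hb] at hab
    exact absurd ⟨_, hab.symm⟩ ha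
  · rwa [dif_neg ha, dif_neg hb] at hab

lemma shiftMap_ne {D : Type} (f : ℕ ↪ D) (x : D) : shiftMap f x ≠ f 0 := by
  unfold shiftMap
  by_cases h : ∃ n, f n = x
  · rw [dif_pos h]
    intro hc
    exact absurd (f.injective hc) (by omega)
  · rw [dif_neg h]
    intro hc
    exact h ⟨0, hc.symm⟩

/-- Membership in the team used in `phiXY`'s hypotheses: values at the cext. -/
lemma support_iex_neq {M : Model σ} {a b : ℕ} (hab : b ≠ a) {Y : Set (ℕ → M.D)} :
    Support M (.iex a (neqF (.var a) (.var b))) Y ↔ ∃ d : M.D, ∀ g ∈ Y, d ≠ g b := by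
  simp only [Support]
  constructor
  · rintro ⟨d, hd⟩
    refine ⟨d, fun g hg => ?_⟩
    have := support_neqF.mp hd (Function.update g a d) ⟨g, hg, rfl⟩
    simpa [Tm.val, Function.update_of_ne hab] using this
  · rintro ⟨d, hd⟩
    refine ⟨d, support_neqF.mpr ?_⟩
    rintro u ⟨g, hg, rfl⟩
    simpa [Tm.val, Function.update_of_ne hab] using hd g hg

lemma support_phiXY_of_finite (M : Model EmptySig) (hfin : Finite M.D)
    (Z : Set (ℕ → M.D)) : Support M phiXY Z := by
  have hdef : Support M phiXY Z ↔ ∀ Y ⊆ Z,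
      (Support M (depF 0 1) Y ∧ Support M (depF 1 0) Y ∧
        Support M (.iex 2 (neqF (.var 2) (.var 1))) Y) →
      Support M (.iex 3 (neqF (.var 3) (.var 0))) Y := Iff.rfl
  rw [hdef]
  rintro Y hYZ ⟨hdep01, hdep10, hiex⟩
  rw [support_depF] at hdep10
  rw [support_iex_neq (by omega)] at hiex
  rw [support_iex_neq (by omega)]
  obtain ⟨d₀, hd₀⟩ := hiex
  by_contra hno
  push_neg at hno
  choose F hF1 hF2 using hno
  have hFinj : Function.Injective (fun d => (F d) 1) := by
    intro a b hab
    have h := hdep10 (F a) (hF1 a) (F b) (hF1 b) hab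
    exact (hF2 a).trans (h.trans (hF2 b).symm)
  have hsurj := (Finite.injective_iff_surjective.mp hFinj) d₀
  obtain ⟨a, ha⟩ := hsurj
  exact hd₀ (F a) (hF1 a) ha.symm

lemma not_support_phiXY (M : Model EmptySig) (hinf : Infinite M.D)
    (Z : Set (ℕ → M.D)) (hZ : ∀ a b : M.D, ∃ g ∈ Z, g 0 = a ∧ g 1 = b) :
    ¬ Support M phiXY Z := by
  intro hsup0
  have hsup : ∀ Y ⊆ Z,
      (Support M (depF 0 1) Y ∧ Support M (depF 1 0) Y ∧
        Support M (.iex 2 (neqF (.var 2) (.var 1))) Y) →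
      Support M (.iex 3 (neqF (.var 3) (.var 0))) Y := hsup0
  set f := @Infinite.natEmbedding M.D hinf with hf
  set Y : Set (ℕ → M.D) := {g ∈ Z | g 1 = shiftMap f (g 0)} with hY
  have hmem : ∀ g ∈ Y, g ∈ Z ∧ g 1 = shiftMap f (g 0) := fun g hg => hg
  have h1 : Support M (depF 0 1) Y := by
    rw [support_depF]
    intro g hg g' hg' h00
    rw [(hmem g hg).2, (hmem g' hg').2, h00]
  have h2 : Support M (depF 1 0) Y := by
    rw [support_depF]
    intro g hg g' hg' h11
    rw [(hmem g hg).2, (hmem g' hg').2] at h11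
    exact shiftMap_inj f h11
  have h3 : Support M (.iex 2 (neqF (.var 2) (.var 1))) Y := by
    rw [support_iex_neq (by omega)]
    exact ⟨f 0, fun g hg hc => shiftMap_ne f (g 0) ((hmem g hg).2.symm.trans hc.symm)⟩
  have hconc := hsup Y (fun g hg => (hmem g hg).1) ⟨h1, h2, h3⟩
  rw [support_iex_neq (by omega)] at hconc
  obtain ⟨d, hd⟩ := hconc
  obtain ⟨g, hgZ, hg0, hg1⟩ := hZ d (shiftMap f d)
  have hgY : g ∈ Y := ⟨hgZ, by rw [hg1, hg0]⟩
  exact hd g hgY hg0.symm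

end Aux3


/-- The finite model with domain `Fin (N+1)`. -/
def finModel (N : ℕ) : Model EmptySig :=
  ⟨Fin (N + 1), ⟨0⟩, fun f => f.elim, fun r => r.elim⟩

lemma support_atLeast_finModel (N n : ℕ) (hn : n ≤ N + 1) :
    Support (finModel N) (atLeast n) {fun k => (⟨k % (N + 1), Nat.mod_lt _ (Nat.succ_pos N)⟩ : Fin (N+1))} := by
  rw [flat (isCl_atLeast n)]
  rintro g rfl
  refine truth_atLeast _ fun i j hi hj hij => ?_
  intro hc
  change (⟨i % (N + 1), _⟩ : Fin (N + 1)) = ⟨j % (N + 1), _⟩ at hc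
  rw [Fin.mk.injEq, Nat.mod_eq_of_lt (by omega), Nat.mod_eq_of_lt (by omega)] at hc
  exact hij hc

lemma support_psi_of_finite (M : Model EmptySig) (hfin : Finite M.D)
    (X : Set (ℕ → M.D)) : Support M psiFin X := by
  have : Support M psiFin X ↔
      Support M phiXY (allext M (allext M X 0) 1) := Iff.rfl
  rw [this]
  exact support_phiXY_of_finite M hfin _



/-- Failure of satisfiability-compactness for InqBT+[x]: every finite subset
    of `Γ ∪ {ψ}` is satisfiable (supported by some model and nonempty team),
    but the whole set is not. -/
theorem stmt13 :
    (∀ S : Finset (Fm EmptySig), ↑S ⊆ GammaFin ∪ {psiFin} →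
      ∃ (M : Model EmptySig) (X : Set (ℕ → M.D)),
        X.Nonempty ∧ ∀ φ ∈ S, Support M φ X) ∧
    ¬ ∃ (M : Model EmptySig) (X : Set (ℕ → M.D)),
        X.Nonempty ∧ ∀ φ ∈ GammaFin ∪ {psiFin}, Support M φ X := by
  constructor
  · intro S hS
    classical
    set nOf : Fm EmptySig → ℕ :=
      fun φ => if h : ∃ n, φ = atLeast n then h.choose else 0 with hnOf
    set N := S.sup nOf with hN
    refine ⟨finModel N, {fun k => (⟨k % (N + 1), Nat.mod_lt _ (Nat.succ_pos N)⟩ : Fin (N+1))},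
      ⟨_, rfl⟩, ?_⟩
    intro φ hφ
    rcases hS hφ with hΓ | hψ
    · obtain ⟨n, hn⟩ := hΓ
      have hex : ∃ m, φ = atLeast m := ⟨n, hn.symm⟩
      have hval : φ = atLeast (nOf φ) := by
        rw [hnOf]; simp only [hex, dif_pos]
        exact hex.choose_spec
      have hle : nOf φ ≤ N := Finset.le_sup hφ
      rw [hval]
      exact support_atLeast_finModel N (nOf φ) (by omega)
    · rw [Set.mem_singleton_iff] at hψ
      rw [hψ]
      exact support_psi_of_finite _ (inferInstanceAs (Finite (Fin (N+1)))) _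
  · rintro ⟨M, X, ⟨g₀, hg₀⟩, hsup⟩
    have hinf : Infinite M.D := by
      by_contra hI
      have hfin : Finite M.D := not_infinite_iff_finite.mp hI
      set n := Nat.card M.D + 1 with hn
      have hsupn := hsup (atLeast n) (Set.mem_union_left _ ⟨n, rfl⟩)
      have ht := (flat (isCl_atLeast n) X).mp hsupn g₀ hg₀
      obtain ⟨h, hh⟩ := inj_of_truth_atLeast ht
      have hinj : Function.Injective (fun i : Fin n => h i) := by
        intro i j hij
        by_contra hne
        exact hh i j i.2 j.2 (fun hc => hne (Fin.ext hc)) hij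
      have hcard := Nat.card_le_card_of_injective _ hinj
      rw [Nat.card_eq_fintype_card, Fintype.card_fin] at hcard
      omega
    have hψ := hsup psiFin (Set.mem_union_right _ rfl)
    have hψ' : Support M phiXY (allext M (allext M X 0) 1) := hψ
    refine not_support_phiXY M hinf _ ?_ hψ'
    intro a b
    refine ⟨Function.update (Function.update g₀ 0 a) 1 b, ?_, ?_, ?_⟩
    · exact Set.mem_iUnion.mpr ⟨b, ⟨Function.update g₀ 0 a,
        Set.mem_iUnion.mpr ⟨a, ⟨g₀, hg₀, rfl⟩⟩, rfl⟩⟩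
    · rw [Function.update_of_ne (by omega), Function.update_self]
    · rw [Function.update_self]
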